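/- arXiv:1106.1144 — 2 statements merged into one kernel-verified Lean document; each statement's English description precedes it below -/
import Mathlib

section
/- Spatial semijets of time-differentiable functions yield parabolic semijets: Let ū ∈ C^{1,0}((0,T) × ℝ^d) and let (t̂,ŷ) ∈ (0,T) × ℝ^d. If (p,X) ∈ J̄^{2,+}(ū(t̂,·))(ŷ), where ū(t̂,·) denotes the function y ↦ ū(t̂,y) of the space variable with the time t̂ frozen, then (∂_t ū(t̂,ŷ), p, X) ∈ P̄^{2,+}ū(t̂,ŷ). -/
open scoped RealInnerProductSpace BigOperators
open Filter Asymptotics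

noncomputable section

/-- The Euclidean state space `ℝ^d`. -/
abbrev EucSp (d : ℕ) := EuclideanSpace ℝ (Fin d)

/-- A path with terminal time `t`, recorded as a total function on `ℝ`;
only the values of `f` on `[0, t]` are relevant. -/
structure PPath (d : ℕ) where
  t : ℝ
  f : ℝ → EucSp d

namespace PPath

variable {d : ℕ}

/-- Right continuity of the path on `[0, t]`. -/
def RightCont (ω : PPath d) : Prop :=
  ∀ s ∈ Set.Ico (0:ℝ) ω.t, ContinuousWithinAt ω.f (Set.Ici s) s

/-- `ω ∈ Λ`, i.e. `ω ∈ Λ_t` for some `t ∈ [0, T]`. -/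
def memLambda (T : ℝ) (ω : PPath d) : Prop :=
  0 ≤ ω.t ∧ ω.t ≤ T ∧ ω.RightCont

/-- The vertically shifted path `ω_t^x`: agrees with `ω` on `[0, t)`, terminal value `ω(t) + x`. -/
def vshift (ω : PPath d) (x : EucSp d) : PPath d :=
  ⟨ω.t, fun s => if s < ω.t then ω.f s else ω.f ω.t + x⟩

/-- The horizontally extended ("frozen") path `ω_{t,δ} ∈ Λ_{t+δ}`. -/
def freeze (ω : PPath d) (δ : ℝ) : PPath d :=
  ⟨ω.t + δ, fun s => if s < ω.t then ω.f s else ω.f ω.t⟩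

/-- The truncation `ω_s` of `ω` to the time interval `[0, s]`. -/
def trunc (ω : PPath d) (s : ℝ) : PPath d := ⟨s, ω.f⟩

/-- The concatenation `ω̄_{t̄} ⊗ ω_t`: equals `ω̄` on `[0, t̄)` and `ω` on `[t̄, t]`. -/
def concat (ωb ω : PPath d) : PPath d :=
  ⟨ω.t, fun s => if s < ωb.t then ωb.f s else ω.f s⟩

/-- `ω ∈ Λ_{Q̄}`. -/
def memQbar (T : ℝ) (Q : Set (EucSp d)) (ω : PPath d) : Prop :=
  ω.memLambda T ∧ (∀ s ∈ Set.Ico (0:ℝ) ω.t, ω.f s ∈ Q) ∧ ω.f ω.t ∈ closure Q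

/-- `ω ∈ Λ_Q` (in particular `t < T`). -/
def memQ (T : ℝ) (Q : Set (EucSp d)) (ω : PPath d) : Prop :=
  0 ≤ ω.t ∧ ω.t < T ∧ ω.RightCont ∧ ∀ s ∈ Set.Icc (0:ℝ) ω.t, ω.f s ∈ Q

/-- `ω ∈ Λ_{∂Q}`. -/
def memBdry (T : ℝ) (Q : Set (EucSp d)) (ω : PPath d) : Prop :=
  (ω.memLambda T ∧ (∀ s ∈ Set.Ico (0:ℝ) ω.t, ω.f s ∈ Q) ∧ ω.f ω.t ∈ frontier Q)
    ∨ (ω.t = T ∧ ω.memQbar T Q)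

/-- The path `(ω_t^{y-ω(t)})_{t, s-t}`, parametrized by the absolute time `p.1 = s`
and the absolute terminal position `p.2 = y`. -/
def ext (ω : PPath d) (p : ℝ × EucSp d) : PPath d :=
  (ω.vshift (p.2 - ω.f ω.t)).freeze (p.1 - ω.t)

/-- The path `(ω_t^{y-ω(t)})_{t, δ}`, parametrized by the duration `p.1 = δ`
and the absolute terminal position `p.2 = y`. -/
def extDur (ω : PPath d) (p : ℝ × EucSp d) : PPath d :=
  (ω.vshift (p.2 - ω.f ω.t)).freeze p.1

end PPath

variable {d : ℕ}

/-- The class `USC_*(Λ_{Q̄})`. -/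
def USCstar (T : ℝ) (Q : Set (EucSp d)) (u : PPath d → ℝ) : Prop :=
  (∀ ω : PPath d, ω.memQbar T Q →
    UpperSemicontinuousOn (fun p : ℝ × EucSp d => u (ω.extDur p))
      (Set.Icc (0:ℝ) (T - ω.t) ×ˢ closure Q))
  ∧ (∀ ω : PPath d, ω.memQbar T Q → ∀ ts : ℕ → ℝ,
      (∀ i, 0 ≤ ts i ∧ ts i ≤ ω.t) → Monotone ts →
      Tendsto ts atTop (nhds ω.t) →
      Filter.limsup (fun i => u (ω.trunc (ts i))) atTop ≤
        sSup {y : ℝ | ∃ x : EucSp d, ω.f ω.t + x ∈ closure Q ∧ y = u (ω.vshift x)})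

/-- The class `LSC_*(Λ_{Q̄})`. -/
def LSCstar (T : ℝ) (Q : Set (EucSp d)) (u : PPath d → ℝ) : Prop :=
  USCstar T Q (fun ω => -u ω)

/-- The quadratic form `⟨A x, x⟩` of a matrix. -/
def quadForm (A : Matrix (Fin d) (Fin d) ℝ) (x : EucSp d) : ℝ :=
  ∑ i, ∑ j, A i j * x i * x j

/-- The order `X ≤ Y` on symmetric matrices. -/
def MatLE (X Y : Matrix (Fin d) (Fin d) ℝ) : Prop := (Y - X).PosSemidef

/-- The horizontal (time) derivative `D_t u(ω_t) = a`. -/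
def HasHDeriv (u : PPath d → ℝ) (ω : PPath d) (a : ℝ) : Prop :=
  (fun δ => u (ω.freeze δ) - u ω - a * δ) =o[nhdsWithin 0 (Set.Ioi 0)] (fun δ : ℝ => δ)

/-- The first vertical (space) derivative `D_x u(ω_t) = p`. -/
def HasVDeriv (Q : Set (EucSp d)) (u : PPath d → ℝ) (ω : PPath d) (p : EucSp d) : Prop :=
  (fun x => u (ω.vshift x) - u ω - ⟪p, x⟫)
    =o[nhdsWithin 0 {x : EucSp d | ω.f ω.t + x ∈ Q}] (fun x => ‖x‖)

/-- The second vertical derivative `D²_{xx} u(ω_t) = A` (together with `D_x u(ω_t) = p`). -/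
def HasVDeriv2 (Q : Set (EucSp d)) (u : PPath d → ℝ) (ω : PPath d)
    (p : EucSp d) (A : Matrix (Fin d) (Fin d) ℝ) : Prop :=
  A.IsSymm ∧
  (fun x => u (ω.vshift x) - u ω - ⟪p, x⟫ - (1/2) * quadForm A x)
    =o[nhdsWithin 0 {x : EucSp d | ω.f ω.t + x ∈ Q}] (fun x => ‖x‖^2)

/-- The class `ℂ^{1,2}(Λ_{Q̄})`: a path functional together with its horizontal and
vertical derivatives, which exist on `Λ_Q` and are continuous along frozen extensions. -/
structure C12 (d : ℕ) (T : ℝ) (Q : Set (EucSp d)) where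
  u : PPath d → ℝ
  Dt : PPath d → ℝ
  Dx : PPath d → EucSp d
  Dxx : PPath d → Matrix (Fin d) (Fin d) ℝ
  hasDt : ∀ ω : PPath d, ω.memQ T Q → HasHDeriv u ω (Dt ω)
  hasDx : ∀ ω : PPath d, ω.memQ T Q → HasVDeriv Q u ω (Dx ω)
  hasDxx : ∀ ω : PPath d, ω.memQ T Q → HasVDeriv2 Q u ω (Dx ω) (Dxx ω)
  cont_u : ∀ ω : PPath d, ω.memQ T Q →
    ContinuousOn (fun p : ℝ × EucSp d => u (ω.ext p)) (Set.Ico ω.t T ×ˢ Q)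
  cont_Dt : ∀ ω : PPath d, ω.memQ T Q →
    ContinuousOn (fun p : ℝ × EucSp d => Dt (ω.ext p)) (Set.Ico ω.t T ×ˢ Q)
  cont_Dx : ∀ ω : PPath d, ω.memQ T Q →
    ContinuousOn (fun p : ℝ × EucSp d => Dx (ω.ext p)) (Set.Ico ω.t T ×ˢ Q)
  cont_Dxx : ∀ ω : PPath d, ω.memQ T Q →
    ContinuousOn (fun p : ℝ × EucSp d => Dxx (ω.ext p)) (Set.Ico ω.t T ×ˢ Q)

/-- The class `ℂ^{1,0}(Λ_{Q̄})`: a path functional together with its horizontal derivative. -/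
structure C10 (d : ℕ) (T : ℝ) (Q : Set (EucSp d)) where
  u : PPath d → ℝ
  Dt : PPath d → ℝ
  hasDt : ∀ ω : PPath d, ω.memQ T Q → HasHDeriv u ω (Dt ω)
  cont_u : ∀ ω : PPath d, ω.memQ T Q →
    ContinuousOn (fun p : ℝ × EucSp d => u (ω.ext p)) (Set.Ico ω.t T ×ˢ Q)
  cont_Dt : ∀ ω : PPath d, ω.memQ T Q →
    ContinuousOn (fun p : ℝ × EucSp d => Dt (ω.ext p)) (Set.Ico ω.t T ×ˢ Q)

/-- The parabolic superjet `P^{2,+}u(ω_t)`: `(a,p,X) ∈ P^{2,+}u(ω_t)` iff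
`u((ω_t^x)_{t,δ}) ≤ u(ω_t) + aδ + ⟨p,x⟩ + ½⟨Xx,x⟩ + o(δ + |x|²)` for `δ ≥ 0`,
`ω(t) + x ∈ Q`. -/
def P2plus (Q : Set (EucSp d)) (u : PPath d → ℝ) (ω : PPath d)
    (a : ℝ) (p : EucSp d) (X : Matrix (Fin d) (Fin d) ℝ) : Prop :=
  X.IsSymm ∧
  (fun q : ℝ × EucSp d =>
      max (u ((ω.vshift q.2).freeze q.1) - u ω - a * q.1 - ⟪p, q.2⟫
        - (1/2) * quadForm X q.2) 0)
    =o[nhdsWithin 0 {q : ℝ × EucSp d | 0 ≤ q.1 ∧ ω.f ω.t + q.2 ∈ Q}]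
    (fun q : ℝ × EucSp d => q.1 + ‖q.2‖^2)

/-- The parabolic subjet `P^{2,−}u(ω_t) = −P^{2,+}(−u)(ω_t)`. -/
def P2minus (Q : Set (EucSp d)) (u : PPath d → ℝ) (ω : PPath d)
    (a : ℝ) (p : EucSp d) (X : Matrix (Fin d) (Fin d) ℝ) : Prop :=
  P2plus Q (fun γ => -u γ) ω (-a) (-p) (-X)

/-- The first order superjet `P^{1,+}u(ω_t)`. -/
def P1plus (Q : Set (EucSp d)) (u : PPath d → ℝ) (ω : PPath d)
    (a : ℝ) (p : EucSp d) : Prop :=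
  (fun q : ℝ × EucSp d =>
      max (u ((ω.vshift q.2).freeze q.1) - u ω - a * q.1 - ⟪p, q.2⟫) 0)
    =o[nhdsWithin 0 {q : ℝ × EucSp d | 0 ≤ q.1 ∧ ω.f ω.t + q.2 ∈ Q}]
    (fun q : ℝ × EucSp d => q.1 + ‖q.2‖)

/-- The first order subjet `P^{1,−}u(ω_t) = −P^{1,+}(−u)(ω_t)`. -/
def P1minus (Q : Set (EucSp d)) (u : PPath d → ℝ) (ω : PPath d)
    (a : ℝ) (p : EucSp d) : Prop :=
  P1plus Q (fun γ => -u γ) ω (-a) (-p)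

/-- The distance `d(ω_t, υ_s) = |ω(t)−υ(s)|² + ∫_0^{t∨s} |ω(r∧t)−υ(r∧s)|² dr`. -/
def pdist (ω υ : PPath d) : ℝ :=
  ‖ω.f ω.t - υ.f υ.t‖^2 +
    ∫ r in (0:ℝ)..(max ω.t υ.t), ‖ω.f (min r ω.t) - υ.f (min r υ.t)‖^2

/-- The distance `d₁(γ_s, γ̄_{s̄}) = |γ(s)−γ̄(s̄)|² + |s−s̄|² +
∫_0^{s∧s̄} (s∧s̄−r)|γ(r)−γ̄(r)|² dr`. -/
def pdist1 (γ γb : PPath d) : ℝ :=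
  ‖γ.f γ.t - γb.f γb.t‖^2 + |γ.t - γb.t|^2 +
    ∫ r in (0:ℝ)..(min γ.t γb.t), (min γ.t γb.t - r) * ‖γ.f r - γb.f r‖^2

/-- The closure `P̄^{2,+}u(ω_t)` of the parabolic superjet. -/
def P2plusBar (T : ℝ) (Q : Set (EucSp d)) (u : PPath d → ℝ) (ω : PPath d)
    (a : ℝ) (p : EucSp d) (X : Matrix (Fin d) (Fin d) ℝ) : Prop :=
  ∃ (ωn : ℕ → PPath d) (an : ℕ → ℝ) (pn : ℕ → EucSp d)
    (Xn : ℕ → Matrix (Fin d) (Fin d) ℝ),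
    (∀ n, (ωn n).memQ T Q) ∧
    (∀ n, P2plus Q u (ωn n) (an n) (pn n) (Xn n)) ∧
    Tendsto (fun n => (ωn n).t) atTop (nhds ω.t) ∧
    Tendsto (fun n => pdist (ωn n) ω) atTop (nhds 0) ∧
    Tendsto (fun n => u (ωn n)) atTop (nhds (u ω)) ∧
    Tendsto an atTop (nhds a) ∧ Tendsto pn atTop (nhds p) ∧
    Tendsto Xn atTop (nhds X)

/-- The closure `P̄^{2,−}u(ω_t) = −P̄^{2,+}(−u)(ω_t)`. -/
def P2minusBar (T : ℝ) (Q : Set (EucSp d)) (u : PPath d → ℝ) (ω : PPath d)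
    (a : ℝ) (p : EucSp d) (X : Matrix (Fin d) (Fin d) ℝ) : Prop :=
  P2plusBar T Q (fun γ => -u γ) ω (-a) (-p) (-X)

/-- Viscosity subsolution of `D_t u + G(u, D_x u, D²_{xx} u) = 0` on `Λ_{Q̄}`. -/
def ViscSubsol2 (T : ℝ) (Q : Set (EucSp d))
    (G : ℝ → EucSp d → Matrix (Fin d) (Fin d) ℝ → ℝ) (u : PPath d → ℝ) : Prop :=
  USCstar T Q u ∧
  ∀ ω : PPath d, ω.memQ T Q → ∀ a p X, P2plus Q u ω a p X → 0 ≤ a + G (u ω) p X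

/-- Viscosity supersolution of `D_t u + G(u, D_x u, D²_{xx} u) = 0` on `Λ_{Q̄}`. -/
def ViscSupersol2 (T : ℝ) (Q : Set (EucSp d))
    (G : ℝ → EucSp d → Matrix (Fin d) (Fin d) ℝ → ℝ) (v : PPath d → ℝ) : Prop :=
  LSCstar T Q v ∧
  ∀ ω : PPath d, ω.memQ T Q → ∀ a p X, P2minus Q v ω a p X → a + G (v ω) p X ≤ 0

/-- Viscosity subsolution of the first order equation `D_t u + G(u, D_x u) = 0`. -/
def ViscSubsol1 (T : ℝ) (Q : Set (EucSp d)) (G : ℝ → EucSp d → ℝ)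
    (u : PPath d → ℝ) : Prop :=
  USCstar T Q u ∧
  ∀ ω : PPath d, ω.memQ T Q → ∀ a p, P1plus Q u ω a p → 0 ≤ a + G (u ω) p

/-- Viscosity supersolution of the first order equation `D_t u + G(u, D_x u) = 0`. -/
def ViscSupersol1 (T : ℝ) (Q : Set (EucSp d)) (G : ℝ → EucSp d → ℝ)
    (v : PPath d → ℝ) : Prop :=
  LSCstar T Q v ∧
  ∀ ω : PPath d, ω.memQ T Q → ∀ a p, P1minus Q v ω a p → a + G (v ω) p ≤ 0

/-- Condition (H2): `G` is continuous and `G(u,p,X) ≥ G(v,p,Y)` whenever `X ≥ Y`, `u ≤ v`. -/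
def H2 (G : ℝ → EucSp d → Matrix (Fin d) (Fin d) ℝ → ℝ) : Prop :=
  Continuous (fun q : ℝ × EucSp d × Matrix (Fin d) (Fin d) ℝ => G q.1 q.2.1 q.2.2) ∧
  ∀ r s : ℝ, ∀ p : EucSp d, ∀ X Y : Matrix (Fin d) (Fin d) ℝ,
    MatLE Y X → r ≤ s → G s p Y ≤ G r p X

/-- A modulus of continuity: continuous, increasing, vanishing at `0`. -/
def IsModulus (ρ : ℝ → ℝ) : Prop :=
  ContinuousOn ρ (Set.Ici 0) ∧ MonotoneOn ρ (Set.Ici 0) ∧ ρ 0 = 0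

/-- The classical parabolic superjet `P^{2,+}w(t̂,x̂)` (one-sided in time, `t ≥ t̂`),
for a function `w` of `(t,x)` on a domain `D`. -/
def CP2plus (D : Set (ℝ × EucSp d)) (w : ℝ × EucSp d → ℝ) (z : ℝ × EucSp d)
    (b : ℝ) (q : EucSp d) (X : Matrix (Fin d) (Fin d) ℝ) : Prop :=
  X.IsSymm ∧
  (fun p : ℝ × EucSp d =>
      max (w (z.1 + p.1, z.2 + p.2) - w z - b * p.1 - ⟪q, p.2⟫
        - (1/2) * quadForm X p.2) 0)
    =o[nhdsWithin 0 {p : ℝ × EucSp d | 0 ≤ p.1 ∧ (z.1 + p.1, z.2 + p.2) ∈ D}]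
    (fun p : ℝ × EucSp d => |p.1| + ‖p.2‖^2)

/-- The closure of the classical parabolic superjet (one-sided in time). -/
def CP2plusBar (D : Set (ℝ × EucSp d)) (w : ℝ × EucSp d → ℝ) (z : ℝ × EucSp d)
    (b : ℝ) (q : EucSp d) (X : Matrix (Fin d) (Fin d) ℝ) : Prop :=
  ∃ (zn : ℕ → ℝ × EucSp d) (bn : ℕ → ℝ) (qn : ℕ → EucSp d)
    (Xn : ℕ → Matrix (Fin d) (Fin d) ℝ),
    (∀ n, zn n ∈ D) ∧
    (∀ n, CP2plus D w (zn n) (bn n) (qn n) (Xn n)) ∧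
    Tendsto zn atTop (nhds z) ∧
    Tendsto (fun n => w (zn n)) atTop (nhds (w z)) ∧
    Tendsto bn atTop (nhds b) ∧ Tendsto qn atTop (nhds q) ∧ Tendsto Xn atTop (nhds X)

/-- The classical parabolic subjet (one-sided in time). -/
def CP2minus (D : Set (ℝ × EucSp d)) (w : ℝ × EucSp d → ℝ) (z : ℝ × EucSp d)
    (b : ℝ) (q : EucSp d) (X : Matrix (Fin d) (Fin d) ℝ) : Prop :=
  CP2plus D (fun y => -w y) z (-b) (-q) (-X)

/-- The closure of the classical parabolic subjet (one-sided in time). -/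
def CP2minusBar (D : Set (ℝ × EucSp d)) (w : ℝ × EucSp d → ℝ) (z : ℝ × EucSp d)
    (b : ℝ) (q : EucSp d) (X : Matrix (Fin d) (Fin d) ℝ) : Prop :=
  CP2plusBar D (fun y => -w y) z (-b) (-q) (-X)

/-- The classical parabolic superjet `P^{2,+}w(t̂,x̂)` with two-sided time increments. -/
def CP2plusTS (D : Set (ℝ × EucSp d)) (w : ℝ × EucSp d → ℝ) (z : ℝ × EucSp d)
    (b : ℝ) (q : EucSp d) (X : Matrix (Fin d) (Fin d) ℝ) : Prop :=
  X.IsSymm ∧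
  (fun p : ℝ × EucSp d =>
      max (w (z.1 + p.1, z.2 + p.2) - w z - b * p.1 - ⟪q, p.2⟫
        - (1/2) * quadForm X p.2) 0)
    =o[nhdsWithin 0 {p : ℝ × EucSp d | (z.1 + p.1, z.2 + p.2) ∈ D}]
    (fun p : ℝ × EucSp d => |p.1| + ‖p.2‖^2)

/-- The closure of the two-sided classical parabolic superjet. -/
def CP2plusTSBar (D : Set (ℝ × EucSp d)) (w : ℝ × EucSp d → ℝ) (z : ℝ × EucSp d)
    (b : ℝ) (q : EucSp d) (X : Matrix (Fin d) (Fin d) ℝ) : Prop :=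
  ∃ (zn : ℕ → ℝ × EucSp d) (bn : ℕ → ℝ) (qn : ℕ → EucSp d)
    (Xn : ℕ → Matrix (Fin d) (Fin d) ℝ),
    (∀ n, zn n ∈ D) ∧
    (∀ n, CP2plusTS D w (zn n) (bn n) (qn n) (Xn n)) ∧
    Tendsto zn atTop (nhds z) ∧
    Tendsto (fun n => w (zn n)) atTop (nhds (w z)) ∧
    Tendsto bn atTop (nhds b) ∧ Tendsto qn atTop (nhds q) ∧ Tendsto Xn atTop (nhds X)

/-- The purely spatial second order superjet `J^{2,+}f(ŷ)` on a domain `D ⊆ ℝ^d`. -/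
def J2plus (D : Set (EucSp d)) (f : EucSp d → ℝ) (yh p : EucSp d)
    (X : Matrix (Fin d) (Fin d) ℝ) : Prop :=
  X.IsSymm ∧
  (fun y : EucSp d => max (f (yh + y) - f yh - ⟪p, y⟫ - (1/2) * quadForm X y) 0)
    =o[nhdsWithin 0 {y : EucSp d | yh + y ∈ D}] (fun y : EucSp d => ‖y‖^2)

/-- The closure `J̄^{2,+}f(ŷ)` of the spatial second order superjet. -/
def J2plusBar (D : Set (EucSp d)) (f : EucSp d → ℝ) (yh p : EucSp d)
    (X : Matrix (Fin d) (Fin d) ℝ) : Prop :=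
  ∃ (yn pn : ℕ → EucSp d) (Xn : ℕ → Matrix (Fin d) (Fin d) ℝ),
    (∀ j, yn j ∈ D ∧ J2plus D f (yn j) (pn j) (Xn j)) ∧
    Tendsto yn atTop (nhds yh) ∧ Tendsto (fun j => f (yn j)) atTop (nhds (f yh)) ∧
    Tendsto pn atTop (nhds p) ∧ Tendsto Xn atTop (nhds X)

/-- The class `USC_*(Λ_{Q̄} × Λ_{Q̄})` of two-path functionals. -/
def USCstar2 (T : ℝ) (Q : Set (EucSp d)) (u : PPath d → PPath d → ℝ) : Prop :=
  (∀ ω υ : PPath d, ω.memQbar T Q → υ.memQbar T Q →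
    UpperSemicontinuousOn
      (fun p : (ℝ × EucSp d) × (ℝ × EucSp d) => u (ω.extDur p.1) (υ.extDur p.2))
      ((Set.Icc (0:ℝ) (T - ω.t) ×ˢ closure Q) ×ˢ (Set.Icc (0:ℝ) (T - υ.t) ×ˢ closure Q)))
  ∧ (∀ ω υ : PPath d, ω.memQbar T Q → υ.memQbar T Q → ∀ ts ss : ℕ → ℝ,
      (∀ i, 0 ≤ ts i ∧ ts i ≤ ω.t) → Monotone ts → Tendsto ts atTop (nhds ω.t) →
      (∀ i, 0 ≤ ss i ∧ ss i ≤ υ.t) → Monotone ss → Tendsto ss atTop (nhds υ.t) →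
      Filter.limsup (fun i => u (ω.trunc (ts i)) (υ.trunc (ss i))) atTop ≤
        sSup {y : ℝ | ∃ x z : EucSp d, ω.f ω.t + x ∈ closure Q ∧
          υ.f υ.t + z ∈ closure Q ∧ y = u (ω.vshift x) (υ.vshift z)})

/-- `‖ω¹_t − ω²_t‖² = |ω¹(t) − ω²(t)|² + ∫_0^t |ω¹(s) − ω²(s)|² ds`
for two paths with the same terminal time. -/
def pairNormSq (ω1 ω2 : PPath d) : ℝ :=
  ‖ω1.f ω1.t - ω2.f ω2.t‖^2 + ∫ s in (0:ℝ)..ω1.t, ‖ω1.f s - ω2.f s‖^2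

/-! The spatial jets approximating `(p, X)` at points `(t̂, yₙ)` are upgraded to parabolic jets
at the same points. By the mean value theorem and continuity of `∂ₜw`, the time increment
`w(t̂ + s, y) - w(t̂, y) - ∂ₜw(t̂, yₙ) s` is `o(|s|)` uniformly for `y` near `yₙ`, while the
spatial remainder at time `t̂` is controlled by the spatial jet. Continuity of `∂ₜw` also gives
`∂ₜw(t̂, yₙ) → ∂ₜw(t̂, ŷ)`. -/

open Set Topology

theorem isLittleO_sub_partialDeriv_fst {E : Type*} [TopologicalSpace E]
    {f f' : ℝ × E → ℝ} {z : ℝ × E}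
    (hderiv : ∀ᶠ x in 𝓝 z, HasDerivAt (fun τ => f (τ, x.2)) (f' x) x.1)
    (hcont : ContinuousAt f' z) :
    (fun x : ℝ × E => f x - f (z.1, x.2) - f' z * (x.1 - z.1)) =o[𝓝 z]
      (fun x => x.1 - z.1) := by
  refine isLittleO_iff.mpr fun ε hε => ?_
  have hnear : ∀ᶠ x in 𝓝 z,
      HasDerivAt (fun τ => f (τ, x.2)) (f' x) x.1 ∧ ‖f' x - f' z‖ ≤ ε :=
    hderiv.and (hcont.eventually (Metric.closedBall_mem_nhds _ hε))
  obtain ⟨U, hU, V, hV, hUV⟩ := mem_nhds_prod_iff.mp (z.eta ▸ hnear)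
  obtain ⟨r, hr, hball⟩ := Metric.mem_nhds_iff.mp hU
  rw [← z.eta]
  filter_upwards [prod_mem_nhds (Metric.ball_mem_nhds z.1 hr) hV] with x ⟨hx₁, hx₂⟩
  have hslope : ∀ τ ∈ Metric.ball z.1 r, HasDerivWithinAt (fun σ => f (σ, x.2) - σ * f' z)
      (f' (τ, x.2) - f' z) (Metric.ball z.1 r) τ := fun τ hτ =>
    ((hUV (mk_mem_prod (hball hτ) hx₂)).1.sub (hasDerivAt_mul_const _)).hasDerivWithinAt
  have hmvt := (convex_ball z.1 r).norm_image_sub_le_of_norm_hasDerivWithin_le hslope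
    (fun τ hτ => (hUV (mk_mem_prod (hball hτ) hx₂)).2) (Metric.mem_ball_self hr) hx₁
  calc ‖f x - f (z.1, x.2) - f' z * (x.1 - z.1)‖
      = ‖(f (x.1, x.2) - x.1 * f' z) - (f (z.1, x.2) - z.1 * f' z)‖ := by ring_nf
    _ ≤ ε * ‖x.1 - z.1‖ := hmvt

theorem max_add_zero_le_abs_add_max_zero (a b : ℝ) : max (a + b) 0 ≤ |a| + max b 0 :=
  max_le (add_le_add (le_abs_self a) (le_max_left b 0))
    (add_nonneg (abs_nonneg a) (le_max_right b 0))

theorem cp2plusTS_of_j2plus {d : ℕ} {D : Set (ℝ × EucSp d)} {w Dtw : ℝ × EucSp d → ℝ}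
    {z : ℝ × EucSp d} {p : EucSp d} {X : Matrix (Fin d) (Fin d) ℝ}
    (hderiv : ∀ᶠ x in 𝓝 z, HasDerivAt (fun τ => w (τ, x.2)) (Dtw x) x.1)
    (hcont : ContinuousAt Dtw z) (hJ : J2plus univ (fun y => w (z.1, y)) z.2 p X) :
    CP2plusTS D w z (Dtw z) p X := by
  obtain ⟨hX, hspace⟩ := hJ
  refine ⟨hX, IsLittleO.mono ?_ nhdsWithin_le_nhds⟩
  have hshift : Tendsto (fun q : ℝ × EucSp d => (z.1 + q.1, z.2 + q.2)) (𝓝 0) (𝓝 z) :=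
    (by fun_prop : Continuous fun q : ℝ × EucSp d => (z.1 + q.1, z.2 + q.2)).tendsto' 0 z
      (by simp)
  have htime := (isLittleO_sub_partialDeriv_fst hderiv hcont).comp_tendsto hshift
  simp only [Function.comp_def, add_sub_cancel_left] at htime
  simp only [mem_univ, ofPred_true, nhdsWithin_univ, Prod.mk.eta] at hspace
  have hspace' := hspace.comp_tendsto (continuous_snd.tendsto' (0 : ℝ × EucSp d) 0 rfl)
  simp only [Function.comp_def] at hspace'
  have hsum (q : ℝ × EucSp d) : ‖|q.1| + ‖q.2‖ ^ 2‖ = |q.1| + ‖q.2‖ ^ 2 :=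
    Real.norm_of_nonneg (by positivity)
  refine (isBigO_of_le _ fun q => ?_).trans_isLittleO
    ((htime.norm_left.trans_le fun q => ?_).add (hspace'.trans_le fun q => ?_))
  · have hsplit : w (z.1 + q.1, z.2 + q.2) - w z - Dtw z * q.1 - ⟪p, q.2⟫ - 1 / 2 * quadForm X q.2
        = (w (z.1 + q.1, z.2 + q.2) - w (z.1, z.2 + q.2) - Dtw z * q.1)
          + (w (z.1, z.2 + q.2) - w z - ⟪p, q.2⟫ - 1 / 2 * quadForm X q.2) := by ring
    rw [hsplit, Real.norm_of_nonneg (le_max_right _ _),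
      Real.norm_of_nonneg (add_nonneg (norm_nonneg _) (le_max_right _ _)), Real.norm_eq_abs]
    exact max_add_zero_le_abs_add_max_zero _ _
  · rw [hsum, Real.norm_eq_abs]
    exact le_add_of_nonneg_right (by positivity)
  · rw [hsum, norm_pow, norm_norm]
    exact le_add_of_nonneg_left (abs_nonneg _)

theorem spatial_semijet_to_parabolic_semijet_general
    {d : ℕ} {T : ℝ}
    (w Dtw : ℝ × EucSp d → ℝ)
    (hderiv : ∀ z : ℝ × EucSp d, z.1 ∈ Set.Ioo (0:ℝ) T →
      HasDerivAt (fun τ : ℝ => w (τ, z.2)) (Dtw z) z.1)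
    (hDtwc : ContinuousOn Dtw (Set.Ioo (0:ℝ) T ×ˢ (Set.univ : Set (EucSp d))))
    (th : ℝ) (hth : th ∈ Set.Ioo (0:ℝ) T) (yh : EucSp d)
    (p : EucSp d) (X : Matrix (Fin d) (Fin d) ℝ)
    (hJ : J2plusBar (Set.univ : Set (EucSp d)) (fun y => w (th, y)) yh p X) :
    CP2plusTSBar (Set.Ioo (0:ℝ) T ×ˢ (Set.univ : Set (EucSp d))) w (th, yh)
      (Dtw (th, yh)) p X := by
  obtain ⟨yn, pn, Xn, hjet, hyn, hwyn, hpn, hXn⟩ := hJ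
  have hnhds (y : EucSp d) : Ioo (0:ℝ) T ×ˢ univ ∈ 𝓝 (th, y) :=
    (isOpen_Ioo.prod isOpen_univ).mem_nhds ⟨hth, trivial⟩
  have hDtw_cont (y : EucSp d) : ContinuousAt Dtw (th, y) := hDtwc.continuousAt (hnhds y)
  have hDtw_deriv (y : EucSp d) :
      ∀ᶠ x in 𝓝 (th, y), HasDerivAt (fun τ => w (τ, x.2)) (Dtw x) x.1 :=
    Filter.mem_of_superset (hnhds y) fun x hx => hderiv x hx.1
  have hzn : Tendsto (fun n => (th, yn n)) atTop (𝓝 (th, yh)) :=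
    tendsto_const_nhds.prodMk_nhds hyn
  exact ⟨fun n => (th, yn n), fun n => Dtw (th, yn n), pn, Xn, fun _ => ⟨hth, trivial⟩,
    fun n => cp2plusTS_of_j2plus (hDtw_deriv _) (hDtw_cont _) (hjet n).2, hzn, hwyn,
    (hDtw_cont yh).tendsto.comp hzn, hpn, hXn⟩

/-- **Spatial semijets of time-differentiable functions yield parabolic semijets**
(Lemma 5.4): for `w ∈ C^{1,0}((0,T) × ℝ^d)` and
`(p, X) ∈ J̄^{2,+}(w(t̂, ·))(ŷ)` one has `(∂_t w(t̂, ŷ), p, X) ∈ P̄^{2,+}w(t̂, ŷ)`. -/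
theorem spatial_semijet_to_parabolic_semijet
    {d : ℕ} {T : ℝ} (hT : 0 < T)
    (w Dtw : ℝ × EucSp d → ℝ)
    (hderiv : ∀ z : ℝ × EucSp d, z.1 ∈ Set.Ioo (0:ℝ) T →
      HasDerivAt (fun τ : ℝ => w (τ, z.2)) (Dtw z) z.1)
    (hwc : ContinuousOn w (Set.Ioo (0:ℝ) T ×ˢ (Set.univ : Set (EucSp d))))
    (hDtwc : ContinuousOn Dtw (Set.Ioo (0:ℝ) T ×ˢ (Set.univ : Set (EucSp d))))
    (th : ℝ) (hth : th ∈ Set.Ioo (0:ℝ) T) (yh : EucSp d)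
    (p : EucSp d) (X : Matrix (Fin d) (Fin d) ℝ)
    (hJ : J2plusBar (Set.univ : Set (EucSp d)) (fun y => w (th, y)) yh p X) :
    CP2plusTSBar (Set.Ioo (0:ℝ) T ×ˢ (Set.univ : Set (EucSp d))) w (th, yh)
      (Dtw (th, yh)) p X :=
  spatial_semijet_to_parabolic_semijet_general w Dtw hderiv hDtwc th hth yh p X hJ
end
end

section
/- Vertical semijets of ℂ^{1,0} path functionals yield path parabolic semijets: Let u ∈ ℂ^{1,0}(Λ_{Q̄}) and ω̂_{t̂} ∈ Λ_Q with t̂ ∈ (0,T). Define ū(x) := u((ω̂_{t̂})^x) for x ∈ ℝ^d with x + ω̂(t̂) ∈ Q. If (p,X) ∈ J̄^{2,+}ū(0), then (D_t u(ω̂_{t̂}), p, X) ∈ P̄^{2,+}u(ω̂_{t̂}). -/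
open scoped RealInnerProductSpace BigOperators
open Filter Asymptotics

noncomputable section

variable {d : ℕ}

/-!
Put `ω_n := ω̂^{y_n}`, where `(p_n, X_n) ∈ J^{2,+}ū(y_n)` approximate `(p, X)`. At `ω_n` the
vertical increment `u(ω_n^x) - u(ω_n)` is controlled by the spatial superjet, while the horizontal
increment `u((ω_n^x)_{t,δ}) - u(ω_n^x) - D_t u(ω_n) δ` is `o(δ)`, uniformly in small `x`, by the
mean value theorem: `D_t u` is continuous along frozen extensions. Hence
`(D_t u(ω_n), p_n, X_n) ∈ P^{2,+}u(ω_n)`. Finally `d(ω_n, ω̂) = |y_n|² → 0`, and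
`D_t u(ω_n) → D_t u(ω̂)` by the same continuity.
-/

namespace PPath

variable {T : ℝ} {Q : Set (EucSp d)} {ω : PPath d}

theorem eq_of_t_f {ω υ : PPath d} (ht : ω.t = υ.t) (hf : ω.f = υ.f) : ω = υ := by
  cases ω; cases υ; cases ht; cases hf; rfl

@[simp] theorem vshift_t (x : EucSp d) : (ω.vshift x).t = ω.t := rfl

@[simp] theorem vshift_f_t (x : EucSp d) : (ω.vshift x).f ω.t = ω.f ω.t + x := by
  simp [vshift]

theorem vshift_vshift (x y : EucSp d) : (ω.vshift x).vshift y = ω.vshift (x + y) := by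
  refine eq_of_t_f rfl (funext fun s => ?_)
  by_cases h : s < ω.t <;> simp [vshift, h, add_assoc]

theorem vshift_zero_freeze (δ : ℝ) : (ω.vshift 0).freeze δ = ω.freeze δ := by
  refine eq_of_t_f rfl (funext fun s => ?_)
  by_cases h : s < ω.t <;> simp [freeze, vshift, h]

theorem vshift_freeze_zero (y : EucSp d) : (ω.vshift y).freeze 0 = ω.vshift y := by
  refine eq_of_t_f (add_zero _) (funext fun s => ?_)
  by_cases h : s < ω.t <;> simp [freeze, vshift, h]

theorem freeze_freeze {s : ℝ} (hs : 0 ≤ s) (σ : ℝ) :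
    (ω.freeze s).freeze σ = ω.freeze (s + σ) := by
  refine eq_of_t_f (add_assoc _ _ _) (funext fun w => ?_)
  have hts : ¬ ω.t + s < ω.t := by linarith
  by_cases h : w < ω.t
  · simp [freeze, h, show w < ω.t + s by linarith]
  · by_cases h' : w < ω.t + s <;> simp [freeze, h, h', hts]

theorem ext_add (s : ℝ) (y : EucSp d) :
    ω.ext (ω.t + s, ω.f ω.t + y) = (ω.vshift y).freeze s := by
  simp [ext]

theorem ext_self : ω.ext (ω.t, ω.f ω.t) = ω.vshift 0 := by
  simp [ext, vshift_freeze_zero]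

theorem memQ.terminal_mem (hω : ω.memQ T Q) : ω.f ω.t ∈ Q :=
  hω.2.2.2 ω.t ⟨hω.1, le_rfl⟩

/-- Both `ω.vshift y` and `ω.freeze δ` are paths of this shape. -/
theorem memQ.cap (hω : ω.memQ T Q) {z : EucSp d} (hz : z ∈ Q) {τ : ℝ} (hτ : ω.t ≤ τ)
    (hτT : τ < T) : (⟨τ, fun v => if v < ω.t then ω.f v else z⟩ : PPath d).memQ T Q := by
  obtain ⟨ht0, -, hrc, hmem⟩ := hω
  refine ⟨ht0.trans hτ, hτT, fun w hw => ?_, fun v hv => ?_⟩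
  · by_cases h : w < ω.t
    · refine (hrc w ⟨hw.1, h⟩).congr_of_eventuallyEq ?_ (by simp [h])
      filter_upwards [nhdsWithin_le_nhds (Iio_mem_nhds h)] with v hv
      simp [Set.mem_Iio.mp hv]
    · refine (continuousWithinAt_const (b := z)).congr (fun v hv => ?_) (by simp [h])
      simp [not_lt.2 ((not_lt.1 h).trans hv)]
  · by_cases h : v < ω.t
    · simpa [h] using hmem v ⟨hv.1, h.le⟩
    · simpa [h] using hz

theorem memQ.vshift (hω : ω.memQ T Q) {y : EucSp d} (hy : ω.f ω.t + y ∈ Q) :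
    (ω.vshift y).memQ T Q :=
  hω.cap hy le_rfl hω.2.1

theorem memQ.freeze (hω : ω.memQ T Q) {s : ℝ} (hs : 0 ≤ s) (hsT : ω.t + s < T) :
    (ω.freeze s).memQ T Q :=
  hω.cap hω.terminal_mem (le_add_of_nonneg_right hs) hsT

theorem pdist_vshift_self (ht : 0 ≤ ω.t) (y : EucSp d) : pdist (ω.vshift y) ω = ‖y‖ ^ 2 := by
  have hint : (∫ r in (0:ℝ)..ω.t, ‖(ω.vshift y).f (min r ω.t) - ω.f (min r ω.t)‖ ^ 2) = 0 := by
    refine (intervalIntegral.integral_congr_ae ?_).trans intervalIntegral.integral_zero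
    filter_upwards [MeasureTheory.Measure.ae_ne MeasureTheory.volume ω.t] with r hr hmem
    rw [Set.uIoc_of_le ht] at hmem
    have hrt : r < ω.t := lt_of_le_of_ne hmem.2 hr
    simp [PPath.vshift, min_eq_left hrt.le, hrt]
  simp [pdist, max_self, hint]

end PPath

theorem J2plus.vshift {Q : Set (EucSp d)} {u : PPath d → ℝ} {ω : PPath d} {y p : EucSp d}
    {X : Matrix (Fin d) (Fin d) ℝ}
    (h : J2plus {x | ω.f ω.t + x ∈ Q} (fun x => u (ω.vshift x)) y p X) :
    J2plus {x | (ω.vshift y).f (ω.vshift y).t + x ∈ Q} (fun x => u ((ω.vshift y).vshift x))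
      0 p X := by
  simpa [J2plus, PPath.vshift_vshift, add_assoc] using h

section HorizontalDerivative

variable {u : PPath d → ℝ} {ω ω' : PPath d} {a a' : ℝ}

theorem HasHDeriv.tendsto (h : HasHDeriv u ω a) :
    Tendsto (fun δ => u (ω.freeze δ)) (nhdsWithin 0 (Set.Ioi 0)) (nhds (u ω)) := by
  have hδ : Tendsto (fun δ : ℝ => δ) (nhdsWithin 0 (Set.Ioi 0)) (nhds 0) :=
    tendsto_nhdsWithin_of_tendsto_nhds tendsto_id
  have := (h.trans_tendsto hδ).add ((hδ.const_mul a).const_add (u ω))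
  simpa using this

theorem HasHDeriv.unique_of_freeze_eq (h : HasHDeriv u ω a) (h' : HasHDeriv u ω' a')
    (hf : ∀ δ, ω'.freeze δ = ω.freeze δ) : u ω' = u ω ∧ a' = a := by
  have hu : u ω' = u ω := by
    refine tendsto_nhds_unique ?_ h.tendsto
    simpa only [hf] using h'.tendsto
  refine ⟨hu, ?_⟩
  have hlin : (fun δ : ℝ => (a' - a) * δ) =o[nhdsWithin 0 (Set.Ioi 0)] (fun δ : ℝ => δ) := by
    refine (h.sub h').congr_left fun δ => ?_
    simp only [hf, hu]
    ring
  have hslope : Tendsto (fun _ : ℝ => a' - a) (nhdsWithin 0 (Set.Ioi 0)) (nhds 0) := by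
    refine hlin.tendsto_div_nhds_zero.congr' ?_
    filter_upwards [self_mem_nhdsWithin] with δ hδ
    field_simp [ne_of_gt (Set.mem_Ioi.1 hδ)]
  exact sub_eq_zero.1 (tendsto_nhds_unique tendsto_const_nhds hslope)

theorem hasDerivWithinAt_freeze {s : ℝ} (hs : 0 ≤ s) (h : HasHDeriv u (ω.freeze s) a) :
    HasDerivWithinAt (fun σ => u (ω.freeze σ)) a (Set.Ici s) s := by
  have h0 : HasDerivWithinAt (fun δ => u (ω.freeze (s + δ))) a (Set.Ioi 0) 0 := by
    rw [hasDerivWithinAt_iff_isLittleO]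
    simpa [HasHDeriv, PPath.freeze_freeze hs, mul_comm] using h
  have hshift : HasDerivWithinAt (fun w : ℝ => w - s) 1 (Set.Ioi s) s :=
    (hasDerivWithinAt_id s _).sub_const s
  have := (h0.comp_of_eq s hshift (fun w hw => Set.mem_Ioi.2 (sub_pos.2 hw)) (sub_self s).symm)
  rw [← hasDerivWithinAt_Ioi_iff_Ici]
  simpa [Function.comp_def] using this

end HorizontalDerivative

namespace C10

variable {T : ℝ} {Q : Set (EucSp d)} (U : C10 d T Q) {ω : PPath d}

/-- `ω.vshift 0` forgets the junk values of `ω.f` after `ω.t`, so it need not equal `ω`; but it has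
the same frozen extensions. -/
theorem u_vshift_zero (hω : ω.memQ T Q) : U.u (ω.vshift 0) = U.u ω :=
  ((U.hasDt ω hω).unique_of_freeze_eq (U.hasDt _ (hω.vshift (by simpa using hω.terminal_mem)))
    ω.vshift_zero_freeze).1

theorem Dt_vshift_zero (hω : ω.memQ T Q) : U.Dt (ω.vshift 0) = U.Dt ω :=
  ((U.hasDt ω hω).unique_of_freeze_eq (U.hasDt _ (hω.vshift (by simpa using hω.terminal_mem)))
    ω.vshift_zero_freeze).2

theorem tendsto_Dt_vshift_freeze (hω : ω.memQ T Q) :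
    Tendsto (fun q : ℝ × EucSp d => U.Dt ((ω.vshift q.2).freeze q.1))
      (nhdsWithin 0 {q | 0 ≤ q.1 ∧ ω.t + q.1 < T ∧ ω.f ω.t + q.2 ∈ Q}) (nhds (U.Dt ω)) := by
  have hcont := U.cont_Dt ω hω (ω.t, ω.f ω.t) ⟨⟨le_rfl, hω.2.1⟩, hω.terminal_mem⟩
  have hshift : ContinuousWithinAt (fun q : ℝ × EucSp d => (ω.t + q.1, ω.f ω.t + q.2))
      {q | 0 ≤ q.1 ∧ ω.t + q.1 < T ∧ ω.f ω.t + q.2 ∈ Q} 0 := by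
    fun_prop
  have := hcont.comp_of_eq hshift (fun q hq => ⟨⟨le_add_of_nonneg_right hq.1, hq.2.1⟩, hq.2.2⟩)
    (by simp)
  simpa [ContinuousWithinAt, Function.comp_def, PPath.ext_add, PPath.ext_self,
    U.Dt_vshift_zero hω] using this

theorem tendsto_Dt_vshift (hω : ω.memQ T Q) :
    Tendsto (fun y => U.Dt (ω.vshift y)) (nhdsWithin 0 {y | ω.f ω.t + y ∈ Q})
      (nhds (U.Dt ω)) := by
  have hpair : Tendsto (fun y : EucSp d => ((0 : ℝ), y)) (nhdsWithin 0 {y | ω.f ω.t + y ∈ Q})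
      (nhdsWithin 0 {q | 0 ≤ q.1 ∧ ω.t + q.1 < T ∧ ω.f ω.t + q.2 ∈ Q}) :=
    tendsto_nhdsWithin_of_tendsto_nhds_of_eventually_within _
      ((Continuous.prodMk_right 0).tendsto' _ _ rfl |>.mono_left nhdsWithin_le_nhds)
      (eventually_mem_nhdsWithin.mono fun y hy => ⟨le_rfl, by simpa using hω.2.1, hy⟩)
  simpa [Function.comp_def, PPath.vshift_freeze_zero] using
    (U.tendsto_Dt_vshift_freeze hω).comp hpair

theorem continuousOn_freeze (hω : ω.memQ T Q) {δ : ℝ} (hδT : ω.t + δ < T) :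
    ContinuousOn (fun s => U.u (ω.freeze s)) (Set.Icc 0 δ) := by
  have hmaps : Set.MapsTo (fun s : ℝ => (ω.t + s, ω.f ω.t + 0)) (Set.Icc 0 δ)
      (Set.Ico ω.t T ×ˢ Q) := fun s hs =>
    ⟨⟨le_add_of_nonneg_right hs.1, by linarith [hs.2]⟩, by simpa using hω.terminal_mem⟩
  have := (U.cont_u ω hω).comp (by fun_prop) hmaps
  simpa only [Function.comp_def, PPath.ext_add, PPath.vshift_zero_freeze] using this

theorem abs_freeze_sub_le (hω : ω.memQ T Q) {δ a C : ℝ} (hδ : 0 ≤ δ) (hδT : ω.t + δ < T)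
    (hC : ∀ s ∈ Set.Ico 0 δ, |U.Dt (ω.freeze s) - a| ≤ C) :
    |U.u (ω.freeze δ) - U.u (ω.freeze 0) - a * δ| ≤ C * δ := by
  have hderiv : ∀ s ∈ Set.Ico 0 δ, HasDerivWithinAt (fun σ => U.u (ω.freeze σ) - a * σ)
      (U.Dt (ω.freeze s) - a) (Set.Ici s) s := fun s hs => by
    have hu := hasDerivWithinAt_freeze hs.1 (U.hasDt _ (hω.freeze hs.1 (by linarith [hs.2])))
    simpa only [mul_one, id] using hu.fun_sub ((hasDerivWithinAt_id s (Set.Ici s)).const_mul a)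
  have := norm_image_sub_le_of_norm_deriv_right_le_segment
    ((U.continuousOn_freeze hω hδT).fun_sub (continuous_const_mul a).continuousOn) hderiv hC δ
    (Set.right_mem_Icc.2 hδ)
  rw [Real.norm_eq_abs, mul_zero, sub_zero, sub_zero] at this
  convert this using 2
  ring

theorem isLittleO_freeze_sub (hω : ω.memQ T Q) :
    (fun q : ℝ × EucSp d => U.u ((ω.vshift q.2).freeze q.1) - U.u (ω.vshift q.2) - U.Dt ω * q.1)
      =o[nhdsWithin 0 {q | 0 ≤ q.1 ∧ ω.f ω.t + q.2 ∈ Q}] (fun q => q.1) := by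
  refine Asymptotics.isLittleO_iff.2 fun c hc => ?_
  obtain ⟨r, hr, hDt⟩ := Metric.tendsto_nhdsWithin_nhds.1 (U.tendsto_Dt_vshift_freeze hω) c hc
  have hsmall : ∀ᶠ q : ℝ × EucSp d in nhdsWithin 0 {q | 0 ≤ q.1 ∧ ω.f ω.t + q.2 ∈ Q},
      ‖q‖ < min r (T - ω.t) :=
    nhdsWithin_le_nhds (tendsto_norm_zero.eventually (gt_mem_nhds (lt_min hr (by
      linarith [hω.2.1]))))
  filter_upwards [self_mem_nhdsWithin, hsmall] with ⟨δ, y⟩ ⟨hδ, hy⟩ hq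
  rw [Prod.norm_def, max_lt_iff, lt_min_iff, lt_min_iff, Real.norm_eq_abs,
    abs_of_nonneg hδ] at hq
  have hbound : ∀ s ∈ Set.Ico 0 δ, |U.Dt ((ω.vshift y).freeze s) - U.Dt ω| ≤ c := by
    intro s hs
    refine (hDt (x := (s, y)) ⟨hs.1, by simp only; linarith [hs.2], hy⟩ ?_).le
    rw [dist_zero_right, Prod.norm_def, Real.norm_eq_abs, abs_of_nonneg hs.1]
    exact max_lt (by linarith [hs.2]) hq.2.1
  have := U.abs_freeze_sub_le (hω.vshift hy) hδ (by rw [PPath.vshift_t]; linarith) hbound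
  rw [PPath.vshift_freeze_zero] at this
  simpa [Real.norm_eq_abs, abs_of_nonneg hδ] using this

theorem P2plus_of_J2plus_zero (hω : ω.memQ T Q) {p : EucSp d} {X : Matrix (Fin d) (Fin d) ℝ}
    (hJ : J2plus {x | ω.f ω.t + x ∈ Q} (fun x => U.u (ω.vshift x)) 0 p X) :
    P2plus Q U.u ω (U.Dt ω) p X := by
  set l := nhdsWithin (0 : ℝ × EucSp d) {q | 0 ≤ q.1 ∧ ω.f ω.t + q.2 ∈ Q}
  have hnonneg : ∀ᶠ q : ℝ × EucSp d in l, 0 ≤ q.1 :=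
    eventually_mem_nhdsWithin.mono fun q hq => hq.1
  have hsnd : Tendsto Prod.snd l (nhdsWithin 0 {y | 0 + y ∈ {x | ω.f ω.t + x ∈ Q}}) :=
    tendsto_nhdsWithin_of_tendsto_nhds_of_eventually_within _
      (continuous_snd.tendsto' _ _ rfl |>.mono_left nhdsWithin_le_nhds)
      (eventually_mem_nhdsWithin.mono fun q hq => by simpa using hq.2)
  have hle : ∀ g : ℝ × EucSp d → ℝ, (∀ q, 0 ≤ q.1 → 0 ≤ g q ∧ g q ≤ q.1 + ‖q.2‖ ^ 2) →
      g =O[l] fun q => q.1 + ‖q.2‖ ^ 2 := fun g hg =>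
    IsBigO.of_bound' <| hnonneg.mono fun q hq => by
      rw [Real.norm_of_nonneg (hg q hq).1, Real.norm_of_nonneg (by positivity)]
      exact (hg q hq).2
  have htime := ((U.isLittleO_freeze_sub hω).trans_isBigO
    (hle _ fun q hq => ⟨hq, by simp only [le_add_iff_nonneg_right]; positivity⟩)).norm_left
  have hspace := (hJ.2.comp_tendsto hsnd).trans_isBigO
    (hle (fun q => ‖q.2‖ ^ 2) fun q hq => ⟨by positivity, by linarith⟩)
  simp only [Function.comp_def, zero_add, U.u_vshift_zero hω] at hspace
  refine ⟨hJ.1, (IsBigO.of_bound' (Eventually.of_forall fun q => ?_)).trans_isLittleO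
    (htime.add hspace)⟩
  rw [Real.norm_of_nonneg (le_max_right _ _), Real.norm_of_nonneg (by positivity)]
  refine max_le ?_ (by positivity)
  linarith [Real.le_norm_self
      (U.u ((ω.vshift q.2).freeze q.1) - U.u (ω.vshift q.2) - U.Dt ω * q.1),
    le_max_left (U.u (ω.vshift q.2) - U.u ω - ⟪p, q.2⟫ - 1 / 2 * quadForm X q.2) 0]

end C10

theorem vertical_semijet_to_path_parabolic_semijet_general
    {d : ℕ} {T : ℝ} {Q : Set (EucSp d)}
    (U : C10 d T Q) (ωh : PPath d) (hωh : ωh.memQ T Q)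
    (p : EucSp d) (X : Matrix (Fin d) (Fin d) ℝ)
    (hJ : J2plusBar {x : EucSp d | ωh.f ωh.t + x ∈ Q}
      (fun x => U.u (ωh.vshift x)) 0 p X) :
    P2plusBar T Q U.u ωh (U.Dt ωh) p X := by
  obtain ⟨yn, pn, Xn, hJn, hyn, hun, hpn, hXn⟩ := hJ
  have hmem : ∀ n, (ωh.vshift (yn n)).memQ T Q := fun n => hωh.vshift (hJn n).1
  have hyn' : Tendsto yn atTop (nhdsWithin 0 {x | ωh.f ωh.t + x ∈ Q}) :=
    tendsto_nhdsWithin_iff.2 ⟨hyn, Eventually.of_forall fun n => (hJn n).1⟩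
  refine ⟨fun n => ωh.vshift (yn n), fun n => U.Dt (ωh.vshift (yn n)), pn, Xn, hmem,
    fun n => U.P2plus_of_J2plus_zero (hmem n) (hJn n).2.vshift, tendsto_const_nhds, ?_, ?_,
    (U.tendsto_Dt_vshift hωh).comp hyn', hpn, hXn⟩
  · simp_rw [PPath.pdist_vshift_self hωh.1]
    simpa using hyn.norm.pow 2
  · simpa [U.u_vshift_zero hωh] using hun

/-- **Vertical semijets of `ℂ^{1,0}` path functionals yield path parabolic
semijets** (Lemma 5.5): for `u ∈ ℂ^{1,0}(Λ_{Q̄})`, `ω̂_{t̂} ∈ Λ_Q`, `t̂ ∈ (0,T)`,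
and `ū(x) := u((ω̂_{t̂})^x)`, if `(p, X) ∈ J̄^{2,+}ū(0)` then
`(D_t u(ω̂_{t̂}), p, X) ∈ P̄^{2,+}u(ω̂_{t̂})`. -/
theorem vertical_semijet_to_path_parabolic_semijet
    {d : ℕ} {T : ℝ} (hT : 0 < T) {Q : Set (EucSp d)}
    (hQopen : IsOpen Q) (hQbdd : Bornology.IsBounded Q)
    (U : C10 d T Q) (ωh : PPath d) (hωh : ωh.memQ T Q) (ht : 0 < ωh.t)
    (p : EucSp d) (X : Matrix (Fin d) (Fin d) ℝ)
    (hJ : J2plusBar {x : EucSp d | ωh.f ωh.t + x ∈ Q}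
      (fun x => U.u (ωh.vshift x)) 0 p X) :
    P2plusBar T Q U.u ωh (U.Dt ωh) p X :=
  vertical_semijet_to_path_parabolic_semijet_general U ωh hωh p X hJ
end
end
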